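/- arXiv:2604.06698 — 2 statements merged into one kernel-verified Lean document; each statement's English description precedes it below -/
import Mathlib

section
/- The permutahedron P_n has exactly k! · S(n,k) faces of dimension n−k, where S(n,k) is the Stirling number of the second kind; equivalently, the (n−k)-dimensional faces of P_n are in bijection with ordered partitions of {1,...,n} into k nonempty blocks. -/
/-!
STATEMENT 3.  The permutahedron `P_n` has exactly `k! · S(n,k)` faces of
dimension `n−k`, where `S(n,k)` is the Stirling number of the second kind;
equivalently, the `(n−k)`-dimensional faces of `P_n` are in bijection with
ordered partitions of `{1,…,n}` into `k` nonempty blocks.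

Following the combinatorial description of `P_n` (its `(n−k)`-faces are
indexed by ordered partitions `A_1|⋯|A_k` of `{1,…,n}` into `k` nonempty
blocks), a face of dimension `n−k` is modelled as a function
`P : Fin k → Finset (Fin n)` listing the (nonempty, pairwise disjoint,
covering) blocks in order.  We assert that the number of such faces is
`k! · S(n,k)` and that they are in bijection with surjections
`Fin n → Fin k` (the standard encoding of ordered set partitions).
-/

/-- Stirling numbers of the second kind. -/
def stirling : ℕ → ℕ → ℕ
  | 0, 0 => 1
  | 0, _ + 1 => 0
  | _ + 1, 0 => 0
  | n + 1, k + 1 => (k + 1) * stirling n (k + 1) + stirling n k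

/-- Ordered partitions of `{1,…,n}` into `k` nonempty blocks: the index set of
the `(n−k)`-dimensional faces of the permutahedron `P_n`. -/
def PermutahedronFace (n k : ℕ) : Type :=
  {P : Fin k → Finset (Fin n) //
    (∀ i, (P i).Nonempty) ∧ (∀ i j, i ≠ j → Disjoint (P i) (P j)) ∧
      Finset.univ.biUnion P = Finset.univ}


open Function

/-- surjectivity of `Fin.cons` in terms of the tail. -/
lemma surjective_cons_iff {n k : ℕ} (a : Fin (k + 1)) (g : Fin n → Fin (k + 1)) :
    Surjective (Fin.cons a g : Fin (n + 1) → Fin (k + 1)) ↔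
      ∀ b, b ≠ a → ∃ x, g x = b := by
  constructor
  · intro h b _
    obtain ⟨y, hy⟩ := h b
    cases y using Fin.cases with
    | zero => simp at hy; exact absurd hy.symm ‹b ≠ a›
    | succ x => exact ⟨x, by simpa using hy⟩
  · intro h b
    by_cases hb : b = a
    · exact ⟨0, by simp [hb]⟩
    · obtain ⟨x, hx⟩ := h b hb
      exact ⟨x.succ, by simpa using hx⟩

/-- For fixed head value `a`, tails making `Fin.cons a ·` surjective split into
surjective tails and tails avoiding `a` that are "surjective onto the rest". -/
def consFiberEquiv (n k : ℕ) (a : Fin (k + 1)) :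
    {g : Fin n → Fin (k + 1) // Surjective (Fin.cons a g : Fin (n + 1) → Fin (k + 1))} ≃
      ({g : Fin n → Fin (k + 1) // Surjective g} ⊕ {h : Fin n → Fin k // Surjective h}) where
  toFun := fun ⟨g, hg⟩ =>
    if h : Surjective g then Sum.inl ⟨g, h⟩
    else
      Sum.inr ⟨fun x => (finSuccEquiv' a (g x)).get (by
          rw [Option.isSome_iff_ne_none]
          intro hnone
          apply h
          have hga : g x = a := by
            have := congrArg (finSuccEquiv' a).symm hnone
            simpa using this
          intro b
          rcases eq_or_ne b a with rfl | hb
          · exact ⟨x, hga⟩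
          · exact (surjective_cons_iff a g).1 hg b hb),
        by
          intro j
          obtain ⟨x, hx⟩ := (surjective_cons_iff a g).1 hg (a.succAbove j) (Fin.succAbove_ne a j)
          refine ⟨x, ?_⟩
          simp [hx, finSuccEquiv'_succAbove]⟩
  invFun := fun s =>
    match s with
    | Sum.inl ⟨g, hgs⟩ => ⟨g, fun b => (hgs b).elim fun x hx => ⟨x.succ, by simpa using hx⟩⟩
    | Sum.inr ⟨h, hhs⟩ =>
        ⟨fun x => a.succAbove (h x), by
          rw [surjective_cons_iff]
          intro b hb
          obtain ⟨j, hj⟩ := Fin.exists_succAbove_eq hb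
          obtain ⟨x, hx⟩ := hhs j
          exact ⟨x, by rw [hx, hj]⟩⟩
  left_inv := fun ⟨g, hg⟩ => by
    by_cases h : Surjective g
    · simp [h]
    · simp only [h, dif_neg, not_false_iff]
      apply Subtype.ext
      funext x
      show a.succAbove _ = g x
      rw [← finSuccEquiv'_symm_some, Option.some_get, Equiv.symm_apply_apply]
  right_inv := fun s => by
    match s with
    | Sum.inl ⟨g, hgs⟩ => simp [hgs]
    | Sum.inr ⟨h, hhs⟩ =>
        have hns : ¬ Surjective (fun x => a.succAbove (h x)) := by
          intro hsurj
          obtain ⟨x, hx⟩ := hsurj a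
          exact Fin.succAbove_ne a (h x) hx
        simp only [hns, dif_neg, not_false_iff]
        congr 1
        apply Subtype.ext
        funext x
        simp [finSuccEquiv'_succAbove]

def surjSplitEquiv (n k : ℕ) :
    {f : Fin (n + 1) → Fin (k + 1) // Surjective f} ≃
      Fin (k + 1) ×
        ({g : Fin n → Fin (k + 1) // Surjective g} ⊕ {h : Fin n → Fin k // Surjective h}) :=
  ((Equiv.subtypeEquiv (Fin.consEquiv fun _ => Fin (k + 1))
      (fun _ => Iff.rfl)).symm.trans
    (Equiv.subtypeProdEquivSigmaSubtype fun (a : Fin (k + 1)) (g : Fin n → Fin (k + 1)) =>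
        Surjective (Fin.cons a g : Fin (n + 1) → Fin (k + 1)))).trans
    ((Equiv.sigmaCongrRight fun a => consFiberEquiv n k a).trans
      (Equiv.sigmaEquivProd _ _))

lemma card_surj (n k : ℕ) :
    Nat.card {f : Fin n → Fin k // Surjective f} = k.factorial * stirling n k := by
  induction n generalizing k with
  | zero =>
    cases k with
    | zero =>
      haveI : Unique {f : Fin 0 → Fin 0 // Surjective f} :=
        ⟨⟨⟨finZeroElim, fun b => b.elim0⟩⟩, fun f => Subtype.ext (funext fun x => x.elim0)⟩
      simp [Nat.card_unique, stirling]
    | succ k =>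
      haveI : IsEmpty {f : Fin 0 → Fin (k + 1) // Surjective f} :=
        ⟨fun ⟨f, hf⟩ => (hf 0).elim fun x _ => x.elim0⟩
      simp [Nat.card_of_isEmpty, stirling]
  | succ n ih =>
    cases k with
    | zero =>
      haveI : IsEmpty {f : Fin (n + 1) → Fin 0 // Surjective f} :=
        ⟨fun ⟨f, _⟩ => (f 0).elim0⟩
      simp [Nat.card_of_isEmpty, stirling]
    | succ k =>
      rw [Nat.card_congr (surjSplitEquiv n k), Nat.card_prod, Nat.card_sum, ih, ih]
      simp only [stirling, Nat.factorial_succ, Nat.card_eq_fintype_card, Fintype.card_fin]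
      ring

lemma existsUnique_block {n k : ℕ} (P : Fin k → Finset (Fin n))
    (hdisj : ∀ i j, i ≠ j → Disjoint (P i) (P j))
    (hcov : Finset.univ.biUnion P = Finset.univ) (x : Fin n) :
    ∃! i, i ∈ (Finset.univ : Finset (Fin k)) ∧ x ∈ P i := by
  have hx : x ∈ Finset.univ.biUnion P := by rw [hcov]; exact Finset.mem_univ x
  obtain ⟨i, -, hi⟩ := Finset.mem_biUnion.1 hx
  refine ⟨i, ⟨Finset.mem_univ i, hi⟩, ?_⟩
  rintro j ⟨-, hj⟩
  by_contra hne
  exact Finset.disjoint_left.1 (hdisj j i hne) hj hi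

def faceToFun {n k : ℕ} (F : PermutahedronFace n k) : Fin n → Fin k :=
  fun x => Finset.choose _ _ (existsUnique_block F.1 F.2.2.1 F.2.2.2 x)

lemma faceToFun_eq_iff {n k : ℕ} (F : PermutahedronFace n k) (x : Fin n) (i : Fin k) :
    faceToFun F x = i ↔ x ∈ F.1 i := by
  constructor
  · rintro rfl
    exact Finset.choose_property _ _ (existsUnique_block F.1 F.2.2.1 F.2.2.2 x)
  · intro hx
    exact (existsUnique_block F.1 F.2.2.1 F.2.2.2 x).unique
      ⟨Finset.mem_univ _,
        Finset.choose_property _ Finset.univ (existsUnique_block F.1 F.2.2.1 F.2.2.2 x)⟩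
      ⟨Finset.mem_univ _, hx⟩

noncomputable def faceEquiv (n k : ℕ) :
    PermutahedronFace n k ≃ {f : Fin n → Fin k // Surjective f} :=
  Equiv.ofBijective
    (fun F => ⟨faceToFun F, fun i => (F.2.1 i).elim fun x hx =>
      ⟨x, (faceToFun_eq_iff F x i).2 hx⟩⟩)
    ⟨by
      intro F G h
      have hfg : faceToFun F = faceToFun G := congrArg Subtype.val h
      apply Subtype.ext
      funext i
      ext x
      rw [← faceToFun_eq_iff, ← faceToFun_eq_iff, hfg],
      by
      rintro ⟨f, hf⟩
      refine ⟨⟨fun i => Finset.univ.filter fun x => f x = i, fun i => ?_, fun i j hij => ?_,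
        ?_⟩, ?_⟩
      · obtain ⟨x, hx⟩ := hf i
        exact ⟨x, by simp [hx]⟩
      · rw [Finset.disjoint_left]
        intro x hx hx'
        simp only [Finset.mem_filter] at hx hx'
        exact hij (hx.2 ▸ hx'.2 ▸ rfl)
      · ext x
        simp
      · apply Subtype.ext
        funext x
        exact (faceToFun_eq_iff _ x (f x)).2 (by simp)⟩


theorem stmt3 (n k : ℕ) :
    Nat.card (PermutahedronFace n k) = k.factorial * stirling n k ∧
    Nonempty (PermutahedronFace n k ≃ {f : Fin n → Fin k // Function.Surjective f}) := by
  exact ⟨by rw [Nat.card_congr (faceEquiv n k), card_surj], ⟨faceEquiv n k⟩⟩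
end

section
/- In the cubical chain complex of a cubical set, the Serre diagonal Δ_□(u) = Σ_{A|B} sgn(A;B) · d^0_B(u) ⊗ d^1_A(u), summed over all complementary pairs (A,B) of subsets of {1,...,m} (including A or B empty), is coassociative: (Δ_□ ⊗ 1) ∘ Δ_□ = (1 ⊗ Δ_□) ∘ Δ_□. -/
/-!
STATEMENT 7.  In the cubical chain complex of a cubical set, the Serre
diagonal
`Δ_□(u) = Σ_{A|B} sgn(A;B) · d^0_B(u) ⊗ d^1_A(u)`,
summed over all complementary pairs `(A,B)` of subsets of `{1,…,m}`
(including `A` or `B` empty), is coassociative: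
`(Δ_□ ⊗ 1) ∘ Δ_□ = (1 ⊗ Δ_□) ∘ Δ_□`.

A cubical set is abstracted by its set of cells, a dimension function, and
face operators `face ε i` (`ε = false` for `d^0_i`, `ε = true` for `d^1_i`)
subject to the cubical identities.  `C_*(X)` is the free module on the cells,
and `Δ_□` is extended linearly. -/

/-- The cells, dimensions and face operators of a cubical set. -/
structure CubicalData where
  Cell : Type
  dim : Cell → ℕ
  face : Bool → ℕ → Cell → Cell

/-- Iterated face operator `d^ε_S`: for `S = {j_1 < ⋯ < j_q}` this is
`d^ε_{j_1} ∘ ⋯ ∘ d^ε_{j_q}`. -/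
def iterFace (X : CubicalData) (ε : Bool) (S : Finset ℕ) (c : X.Cell) : X.Cell :=
  (S.sort (· ≤ ·)).foldr (X.face ε) c

/-- The shuffle sign `sgn(A;B)`: `(−1)` to the number of inversions between
`A` and `B`. -/
def shuffleSign (A B : Finset ℕ) : ℤ :=
  (-1) ^ ((A ×ˢ B).filter fun p => p.2 < p.1).card

/-- The Serre (cubical) diagonal on the chain complex of a cubical set. -/
noncomputable def serreDiagonal (R : Type*) [CommRing R] (X : CubicalData) :
    (X.Cell →₀ R) →ₗ[R] TensorProduct R (X.Cell →₀ R) (X.Cell →₀ R) :=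
  Finsupp.lift _ R _ fun u =>
    ∑ A ∈ (Finset.Icc 1 (X.dim u)).powerset,
      ((shuffleSign A ((Finset.Icc 1 (X.dim u)) \ A) : ℤ) : R) •
        (Finsupp.single (iterFace X false ((Finset.Icc 1 (X.dim u)) \ A) u) (1 : R) ⊗ₜ[R]
          Finsupp.single (iterFace X true A u) (1 : R))

/-!
Evaluated on an `m`-cube `u`, both sides expand into the same sum over the decompositions
`{1,…,m} = P ⊔ Q ⊔ T`, with summand
`sgn(P;Q) sgn(P;T) sgn(Q;T) · d⁰_{Q∪T} u ⊗ d¹_P d⁰_T u ⊗ d¹_{P∪Q} u`.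
The key is to write the diagonal of a face `d^ω_B c` in the coordinates of `c`: by the cubical
identities, the face of `d^ω_B c` in the coordinates `S` is the face of `c` in the coordinates
`σ_B(S) ∪ B`, where `σ_B` (`coordEmb B`) enumerates the coordinates outside `B` increasingly.
Being increasing, `σ_B` preserves shuffle signs, and the shuffle sign is multiplicative in each
argument along disjoint unions, which makes the signs agree.
-/

open Finset

def liftIdx : List ℕ → ℕ → ℕ
  | [], i => i
  | t :: ts, i => if t ≤ i then liftIdx ts (i + 1) else i

lemma le_liftIdx : ∀ (l : List ℕ) (i : ℕ), i ≤ liftIdx l i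
  | [], _ => le_rfl
  | t :: ts, i => by
    unfold liftIdx
    split
    · exact (Nat.le_succ i).trans (le_liftIdx ts _)
    · exact le_rfl

lemma liftIdx_le : ∀ (l : List ℕ) (i : ℕ), liftIdx l i ≤ i + l.length
  | [], _ => le_rfl
  | t :: ts, i => by
    unfold liftIdx
    split
    · have := liftIdx_le ts (i + 1)
      simp only [List.length_cons]
      omega
    · exact Nat.le_add_right _ _

lemma liftIdx_strictMono : ∀ l : List ℕ, StrictMono (liftIdx l)
  | [], _, _, h => h
  | t :: ts, i, j, h => by
    unfold liftIdx
    split_ifs with hi hj hj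
    · exact liftIdx_strictMono ts (Nat.succ_lt_succ h)
    · omega
    · exact h.trans_le ((Nat.le_succ j).trans (le_liftIdx ts _))
    · exact h

lemma liftIdx_notMem : ∀ {l : List ℕ}, l.Pairwise (· < ·) → ∀ i, liftIdx l i ∉ l
  | [], _, _ => List.not_mem_nil
  | t :: ts, hl, i => by
    obtain ⟨ht, hts⟩ := List.pairwise_cons.mp hl
    unfold liftIdx
    split
    · have := le_liftIdx ts (i + 1)
      rintro (_ | ⟨_, hm⟩)
      · omega
      · exact liftIdx_notMem hts _ hm
    · rintro (_ | ⟨_, hm⟩)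
      · omega
      · have := ht _ hm
        omega

/-- Coordinate `i` of a face `d_B c` is coordinate `coordEmb B i` of `c`: the `i`-th natural
number not in `B`, counting from `0`. -/
def coordEmb (B : Finset ℕ) : ℕ → ℕ :=
  liftIdx (B.sort (· ≤ ·))

lemma coordEmb_empty (i : ℕ) : coordEmb ∅ i = i := by
  simp [coordEmb, liftIdx]

lemma coordEmb_insert_of_forall_lt {t : ℕ} {B : Finset ℕ} (ht : ∀ b ∈ B, t < b) (i : ℕ) :
    coordEmb (insert t B) i = if t ≤ i then coordEmb B (i + 1) else i := by
  rw [coordEmb, sort_insert _ (fun b hb => (ht b hb).le) fun h => lt_irrefl t (ht t h)]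
  rfl

lemma le_coordEmb (B : Finset ℕ) (i : ℕ) : i ≤ coordEmb B i :=
  le_liftIdx _ i

lemma coordEmb_le (B : Finset ℕ) (i : ℕ) : coordEmb B i ≤ i + #B :=
  length_sort (α := ℕ) (· ≤ ·) ▸ liftIdx_le _ i

lemma coordEmb_notMem (B : Finset ℕ) (i : ℕ) : coordEmb B i ∉ B := fun h =>
  liftIdx_notMem (sortedLT_sort B).pairwise i ((mem_sort _).mpr h)

lemma coordEmb_strictMono (B : Finset ℕ) : StrictMono (coordEmb B) :=
  liftIdx_strictMono _

lemma coordEmb_insert_of_lt {x i : ℕ} {B : Finset ℕ} (hi : coordEmb B i < x) :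
    coordEmb (insert x B) i = coordEmb B i := by
  induction B using Finset.induction_on_min generalizing i with
  | empty =>
    rw [coordEmb_empty] at hi ⊢
    rw [coordEmb_insert_of_forall_lt (by simp), if_neg (by omega)]
  | insert t B ht ih =>
    rcases lt_trichotomy x t with hxt | rfl | htx
    · have hxB : ∀ b ∈ insert t B, x < b := by
        simpa [hxt] using fun b hb => hxt.trans (ht b hb)
      have := le_coordEmb (insert t B) i
      rw [coordEmb_insert_of_forall_lt hxB, if_neg (by omega),
        coordEmb_insert_of_forall_lt ht, if_neg (by omega)]
    · rw [insert_idem]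
    · have htB : ∀ b ∈ insert x B, t < b := by simpa [htx] using ht
      rw [coordEmb_insert_of_forall_lt ht] at hi
      rw [insert_comm, coordEmb_insert_of_forall_lt htB, coordEmb_insert_of_forall_lt ht]
      split_ifs at hi ⊢
      · exact ih hi
      · rfl

lemma coordEmb_union_of_lt {B T : Finset ℕ} {i : ℕ} (hT : ∀ x ∈ T, coordEmb B i < x) :
    coordEmb (T ∪ B) i = coordEmb B i := by
  induction T using Finset.induction_on with
  | empty => rw [empty_union]
  | insert x T _ ih =>
    have hT' := fun y hy => hT y (mem_insert_of_mem hy)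
    rw [insert_union, coordEmb_insert_of_lt ((ih hT').trans_lt (hT x (mem_insert_self x T))),
      ih hT']

lemma coordEmb_image_Icc {m : ℕ} {B : Finset ℕ} (hB : B ⊆ Icc 1 m) :
    (Icc 1 (m - #B)).image (coordEmb B) = Icc 1 m \ B := by
  refine eq_of_subset_of_card_le (fun j hj => ?_) ?_
  · obtain ⟨i, hi, rfl⟩ := mem_image.mp hj
    have hi := mem_Icc.mp hi
    have := le_coordEmb B i
    have := coordEmb_le B i
    exact mem_sdiff.mpr ⟨mem_Icc.mpr ⟨by omega, by omega⟩, coordEmb_notMem B i⟩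
  · rw [card_sdiff_of_subset hB, card_image_of_injective _ (coordEmb_strictMono B).injective]
    simp

namespace CubicalData

variable (X : CubicalData)

/-- The faces `d^{F i}_i` for all `i ∈ S`, the largest `i` innermost, so that no index needs
renumbering. -/
def mixedFace (F : ℕ → Bool) (S : Finset ℕ) (c : X.Cell) : X.Cell :=
  (S.sort (· ≤ ·)).foldr (fun i => X.face (F i) i) c

variable {X}

lemma iterFace_eq_mixedFace (ε : Bool) (S : Finset ℕ) (c : X.Cell) :
    iterFace X ε S c = X.mixedFace (fun _ => ε) S c := rfl

lemma mixedFace_empty (F : ℕ → Bool) (c : X.Cell) : X.mixedFace F ∅ c = c := by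
  simp [mixedFace]

lemma mixedFace_insert_of_forall_lt (F : ℕ → Bool) {a : ℕ} {S : Finset ℕ}
    (ha : ∀ b ∈ S, a < b) (c : X.Cell) :
    X.mixedFace F (insert a S) c = X.face (F a) a (X.mixedFace F S c) := by
  rw [mixedFace, sort_insert _ (fun b hb => (ha b hb).le) fun h => lt_irrefl a (ha a h)]
  rfl

lemma mixedFace_congr {F G : ℕ → Bool} {S : Finset ℕ} (h : ∀ i ∈ S, F i = G i)
    (c : X.Cell) :
    X.mixedFace F S c = X.mixedFace G S c := by
  induction S using Finset.induction_on_min with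
  | empty => rw [mixedFace_empty, mixedFace_empty]
  | insert a S ha ih =>
    rw [mixedFace_insert_of_forall_lt F ha, mixedFace_insert_of_forall_lt G ha,
      h a (mem_insert_self a S), ih fun i hi => h i (mem_insert_of_mem hi)]

lemma dim_mixedFace
    (hdim : ∀ (ε : Bool) (i : ℕ) (c : X.Cell), 1 ≤ i → i ≤ X.dim c →
      X.dim (X.face ε i c) = X.dim c - 1)
    (F : ℕ → Bool) {c : X.Cell} {S : Finset ℕ} (hS : S ⊆ Icc 1 (X.dim c)) :
    X.dim (X.mixedFace F S c) = X.dim c - #S := by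
  induction S using Finset.induction_on_min with
  | empty => rw [mixedFace_empty, card_empty, Nat.sub_zero]
  | insert a S ha ih =>
    have haS : a ∉ S := fun h => lt_irrefl a (ha a h)
    have ha_mem := mem_Icc.mp (hS (mem_insert_self a S))
    have hS_Ioc : S ⊆ Ioc a (X.dim c) := fun b hb =>
      mem_Ioc.mpr ⟨ha b hb, (mem_Icc.mp (hS (mem_insert_of_mem hb))).2⟩
    have hcard := card_le_card hS_Ioc
    rw [Nat.card_Ioc] at hcard
    have hdimS := ih ((subset_insert a S).trans hS)
    rw [mixedFace_insert_of_forall_lt F ha, hdim _ _ _ ha_mem.1 (by omega), hdimS,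
      card_insert_of_notMem haS]
    omega

section CubicalIdentity

variable (hface : ∀ (ε ω : Bool) (i j : ℕ) (c : X.Cell), i < j →
  X.face ε i (X.face ω j c) = X.face ω (j - 1) (X.face ε i c))
include hface

lemma face_mixedFace (F : ℕ → Bool) (B : Finset ℕ) (i : ℕ) (c : X.Cell) :
    X.face (F (coordEmb B i)) i (X.mixedFace F B c) =
      X.mixedFace F (insert (coordEmb B i) B) c := by
  induction B using Finset.induction_on_min generalizing i with
  | empty =>
    rw [coordEmb_empty, mixedFace_empty, mixedFace_insert_of_forall_lt F (by simp),
      mixedFace_empty]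
  | insert t B ht ih =>
    rw [coordEmb_insert_of_forall_lt ht]
    split_ifs with hti
    -- `d_i d_t = d_t d_{i+1}` for `t ≤ i`, so `d_i` moves inside `d_t` and becomes `d_{i+1}`
    · have hlt : t < coordEmb B (i + 1) := by have := le_coordEmb B (i + 1); omega
      have htB : ∀ b ∈ insert (coordEmb B (i + 1)) B, t < b := by simpa [hlt] using ht
      rw [mixedFace_insert_of_forall_lt F ht, ← Nat.add_sub_cancel i 1,
        ← hface _ _ t (i + 1) _ (by omega), Nat.add_sub_cancel, ih,
        ← mixedFace_insert_of_forall_lt F htB, insert_comm]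
    · have hit : i < t := by omega
      have hiB : ∀ b ∈ insert t B, i < b := by simpa [hit] using fun b hb => hit.trans (ht b hb)
      rw [mixedFace_insert_of_forall_lt F hiB]

lemma mixedFace_mixedFace (F : ℕ → Bool) (B S : Finset ℕ) (c : X.Cell) :
    X.mixedFace (F ∘ coordEmb B) S (X.mixedFace F B c) =
      X.mixedFace F (S.image (coordEmb B) ∪ B) c := by
  induction S using Finset.induction_on_min with
  | empty => rw [mixedFace_empty, image_empty, empty_union]
  | insert a S ha ih =>
    have hemb : coordEmb (S.image (coordEmb B) ∪ B) a = coordEmb B a :=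
      coordEmb_union_of_lt fun x hx => by
        obtain ⟨b, hb, rfl⟩ := mem_image.mp hx
        exact coordEmb_strictMono B (ha b hb)
    rw [mixedFace_insert_of_forall_lt _ ha, ih, Function.comp_apply, ← hemb,
      face_mixedFace hface, hemb, image_insert, insert_union]

lemma iterFace_iterFace (F : ℕ → Bool) {ε ω : Bool} {B S : Finset ℕ}
    (hB : ∀ b ∈ B, F b = ω) (hS : ∀ i ∈ S, F (coordEmb B i) = ε) (c : X.Cell) :
    iterFace X ε S (iterFace X ω B c) = X.mixedFace F (S.image (coordEmb B) ∪ B) c := by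
  rw [iterFace_eq_mixedFace, iterFace_eq_mixedFace, ← mixedFace_congr (fun b hb => hB b hb),
    ← mixedFace_congr (F := F ∘ coordEmb B) (fun i hi => hS i hi), mixedFace_mixedFace hface]

end CubicalIdentity

end CubicalData

lemma shuffleSign_image {f : ℕ → ℕ} (hf : StrictMono f) (A B : Finset ℕ) :
    shuffleSign (A.image f) (B.image f) = shuffleSign A B := by
  unfold shuffleSign
  rw [← prodMap_image_product, filter_image,
    card_image_of_injective _ (hf.injective.prodMap hf.injective)]
  congr 3
  ext p
  exact hf.lt_iff_lt

lemma shuffleSign_union_left {P Q : Finset ℕ} (h : Disjoint P Q) (T : Finset ℕ) :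
    shuffleSign (P ∪ Q) T = shuffleSign P T * shuffleSign Q T := by
  unfold shuffleSign
  rw [← pow_add, union_product, filter_union,
    card_union_of_disjoint (disjoint_filter_filter (disjoint_product.mpr (Or.inl h)))]

lemma shuffleSign_union_right {Q T : Finset ℕ} (P : Finset ℕ) (h : Disjoint Q T) :
    shuffleSign P (Q ∪ T) = shuffleSign P Q * shuffleSign P T := by
  unfold shuffleSign
  rw [← pow_add, product_union, filter_union,
    card_union_of_disjoint (disjoint_filter_filter (disjoint_product.mpr (Or.inr h)))]

lemma sum_powerset_sum_powerset_sdiff {α M : Type*} [DecidableEq α] [AddCommMonoid M]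
    (I : Finset α) (g : Finset α → Finset α → M) :
    ∑ A ∈ I.powerset, ∑ P ∈ A.powerset, g P (A \ P) =
      ∑ P ∈ I.powerset, ∑ Q ∈ (I \ P).powerset, g P Q := by
  rw [sum_comm' (t' := I.powerset) (s' := fun P => Icc P I) fun A P => by
    simp only [mem_powerset, mem_Icc]; grind]
  refine sum_congr rfl fun P hP => ?_
  have hdisj {Q : Finset α} (hQ : Q ⊆ I \ P) : Disjoint P Q :=
    disjoint_of_subset_right hQ disjoint_sdiff
  rw [Icc_eq_image_powerset (mem_powerset.mp hP), sum_image fun Q hQ Q' hQ' h => by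
    rw [← union_sdiff_cancel_left (hdisj (mem_powerset.mp hQ)),
      ← union_sdiff_cancel_left (hdisj (mem_powerset.mp hQ')), h]]
  exact sum_congr rfl fun Q hQ => by rw [union_sdiff_cancel_left (hdisj (mem_powerset.mp hQ))]

section SerreDiagonal

open TensorProduct Finsupp CubicalData

variable {R : Type*} [CommRing R] {X : CubicalData}

lemma serreDiagonal_single (u : X.Cell) :
    serreDiagonal R X (single u 1) =
      ∑ A ∈ (Icc 1 (X.dim u)).powerset,
        ((shuffleSign A (Icc 1 (X.dim u) \ A) : ℤ) : R) •
          (single (iterFace X false (Icc 1 (X.dim u) \ A) u) (1 : R) ⊗ₜ[R]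
            single (iterFace X true A u) (1 : R)) := by
  simp [serreDiagonal]

variable (R) in
noncomputable def serreTripleTerm (u : X.Cell) (P Q : Finset ℕ) :
    (X.Cell →₀ R) ⊗[R] ((X.Cell →₀ R) ⊗[R] (X.Cell →₀ R)) :=
  ((shuffleSign P Q * shuffleSign P ((Icc 1 (X.dim u) \ P) \ Q) *
      shuffleSign Q ((Icc 1 (X.dim u) \ P) \ Q) : ℤ) : R) •
    (single (iterFace X false (Icc 1 (X.dim u) \ P) u) (1 : R) ⊗ₜ[R]
      (single (X.mixedFace (fun j => decide (j ∈ P)) ((Icc 1 (X.dim u) \ P) \ Q ∪ P) u) (1 : R)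
        ⊗ₜ[R] single (iterFace X true (Q ∪ P) u) (1 : R)))

variable (hface : ∀ (ε ω : Bool) (i j : ℕ) (c : X.Cell), i < j →
    X.face ε i (X.face ω j c) = X.face ω (j - 1) (X.face ε i c))
  (hdim : ∀ (ε : Bool) (i : ℕ) (c : X.Cell), 1 ≤ i → i ≤ X.dim c →
    X.dim (X.face ε i c) = X.dim c - 1)
include hface hdim

lemma serreDiagonal_single_iterFace (ω : Bool) {c : X.Cell} {B : Finset ℕ}
    (hB : B ⊆ Icc 1 (X.dim c)) :
    serreDiagonal R X (single (iterFace X ω B c) 1) =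
      ∑ S ∈ (Icc 1 (X.dim c) \ B).powerset,
        ((shuffleSign S ((Icc 1 (X.dim c) \ B) \ S) : ℤ) : R) •
          (single
              (X.mixedFace (fun j => decide (j ∈ B) && ω) ((Icc 1 (X.dim c) \ B) \ S ∪ B) c)
              (1 : R) ⊗ₜ[R]
            single (X.mixedFace (fun j => decide (j ∉ B) || ω) (S ∪ B) c) (1 : R)) := by
  have hemb := coordEmb_image_Icc hB
  have hdimB : X.dim (iterFace X ω B c) = X.dim c - #B := dim_mixedFace hdim _ hB
  rw [serreDiagonal_single, hdimB, ← hemb, powerset_image,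
    sum_image (image_injOn_powerset_of_injOn (coordEmb_strictMono B).injective.injOn)]
  refine sum_congr rfl fun C _ => ?_
  rw [← image_sdiff _ _ (coordEmb_strictMono B).injective,
    shuffleSign_image (coordEmb_strictMono B),
    iterFace_iterFace hface (fun j => decide (j ∈ B) && ω) (fun b hb => by simp [hb])
      fun i _ => by simp [coordEmb_notMem],
    iterFace_iterFace hface (fun j => decide (j ∉ B) || ω) (fun b hb => by simp [hb])
      fun i _ => by simp [coordEmb_notMem]]

lemma lTensor_serreDiagonal_comp_serreDiagonal_single (u : X.Cell) :
    (LinearMap.lTensor _ (serreDiagonal R X) ∘ₗ serreDiagonal R X) (single u 1) =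
      ∑ P ∈ (Icc 1 (X.dim u)).powerset, ∑ Q ∈ (Icc 1 (X.dim u) \ P).powerset,
        serreTripleTerm R u P Q := by
  rw [LinearMap.comp_apply, serreDiagonal_single, map_sum]
  refine sum_congr rfl fun P hP => ?_
  rw [map_smul, LinearMap.lTensor_tmul,
    serreDiagonal_single_iterFace hface hdim true (mem_powerset.mp hP), tmul_sum,
    Finset.smul_sum]
  refine sum_congr rfl fun Q hQ => ?_
  have hsign : shuffleSign P (Icc 1 (X.dim u) \ P) =
      shuffleSign P Q * shuffleSign P ((Icc 1 (X.dim u) \ P) \ Q) := by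
    rw [← shuffleSign_union_right P disjoint_sdiff, union_sdiff_of_subset (mem_powerset.mp hQ)]
  simp only [Bool.and_true, Bool.or_true]
  rw [tmul_smul, smul_smul, serreTripleTerm, ← Int.cast_mul, hsign, mul_assoc]
  rfl

lemma assoc_rTensor_serreDiagonal_comp_serreDiagonal_single (u : X.Cell) :
    ((TensorProduct.assoc R _ _ _).toLinearMap ∘ₗ
        LinearMap.rTensor _ (serreDiagonal R X) ∘ₗ serreDiagonal R X) (single u 1) =
      ∑ P ∈ (Icc 1 (X.dim u)).powerset, ∑ Q ∈ (Icc 1 (X.dim u) \ P).powerset,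
        serreTripleTerm R u P Q := by
  set I := Icc 1 (X.dim u)
  rw [← sum_powerset_sum_powerset_sdiff, LinearMap.comp_apply, LinearMap.comp_apply,
    serreDiagonal_single, map_sum, map_sum]
  refine sum_congr rfl fun A hA => ?_
  have hA := mem_powerset.mp hA
  rw [map_smul, map_smul, LinearMap.rTensor_tmul,
    serreDiagonal_single_iterFace hface hdim false sdiff_subset, Finset.sdiff_sdiff_eq_self hA,
    sum_tmul, map_sum, Finset.smul_sum]
  refine sum_congr rfl fun S hS => ?_
  have hS := mem_powerset.mp hS
  have hA_eq : A \ S ∪ S = A := sdiff_union_of_subset hS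
  have hT : (I \ S) \ (A \ S) = I \ A := by grind
  have hfirst : A \ S ∪ (I \ A) = I \ S := by grind
  have hsign : shuffleSign A (I \ A) = shuffleSign (A \ S) (I \ A) * shuffleSign S (I \ A) := by
    rw [← shuffleSign_union_left sdiff_disjoint, hA_eq]
  have hsecond : X.mixedFace (fun j => decide (j ∉ I \ A) || false) (S ∪ I \ A) u =
      X.mixedFace (fun j => decide (j ∈ S)) (I \ A ∪ S) u := by
    rw [union_comm]
    exact mixedFace_congr (fun j hj => by grind) u
  simp only [Bool.and_false]
  rw [← smul_tmul', map_smul, LinearEquiv.coe_coe, assoc_tmul, smul_smul, ← Int.cast_mul,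
    serreTripleTerm, hT, hA_eq, hfirst, hsign, hsecond]
  congr 2
  ring

end SerreDiagonal

theorem stmt7 (R : Type*) [CommRing R] (X : CubicalData)
    -- cubical identities
    (hface : ∀ (ε ω : Bool) (i j : ℕ) (c : X.Cell), i < j →
      X.face ε i (X.face ω j c) = X.face ω (j - 1) (X.face ε i c))
    (hdim : ∀ (ε : Bool) (i : ℕ) (c : X.Cell), 1 ≤ i → i ≤ X.dim c →
      X.dim (X.face ε i c) = X.dim c - 1) :
    (TensorProduct.assoc R (X.Cell →₀ R) (X.Cell →₀ R) (X.Cell →₀ R)).toLinearMap ∘ₗ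
        LinearMap.rTensor (X.Cell →₀ R) (serreDiagonal R X) ∘ₗ serreDiagonal R X
      = LinearMap.lTensor (X.Cell →₀ R) (serreDiagonal R X) ∘ₗ serreDiagonal R X := by
  refine Finsupp.lhom_ext' fun u => LinearMap.ext_ring ?_
  exact (assoc_rTensor_serreDiagonal_comp_serreDiagonal_single hface hdim u).trans
    (lTensor_serreDiagonal_comp_serreDiagonal_single hface hdim u).symm
end
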